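/- Under Assumption 1, if the initial distribution is p₀ = δ_M (the Dirac measure at M), then the sequence (p_i)_{i≥0} converges in total variation to a probability measure p* on [0,M]; moreover (p_i)_{[0,M)} ≺ (p_{i+1})_{[0,M)} ≺ (p*)_{[0,M)} for every i ≥ 0. -/

import Mathlib

open MeasureTheory Set Filter

/-- Selective advantage `s(x,u) = w(x,u) / ∫ w(y,u) u(dy)` if the mean fitness is
positive, and `1` otherwise. -/
noncomputable def sel (w : ℝ → MeasureTheory.Measure ℝ → ℝ)
    (u : MeasureTheory.Measure ℝ) (x : ℝ) : ℝ :=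
  if 0 < ∫ y, w y u ∂u then w x u / ∫ y, w y u ∂u else 1

/-- The sequence of type distributions:
`p_i(dx) = (1-β) s(x,p_{i-1}) p_{i-1}(dx) + β q(dx)`. -/
noncomputable def evol (w : ℝ → MeasureTheory.Measure ℝ → ℝ) (β : ℝ)
    (q p₀ : MeasureTheory.Measure ℝ) : ℕ → MeasureTheory.Measure ℝ
  | 0 => p₀
  | i + 1 =>
      ENNReal.ofReal (1 - β) •
          ((evol w β q p₀ i).withDensity fun x =>
            ENNReal.ofReal (sel w (evol w β q p₀ i) x))
        + ENNReal.ofReal β • q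

/-- Convergence in total variation (uniform convergence over all measurable sets). -/
def TendstoTV (p : ℕ → MeasureTheory.Measure ℝ) (μ : MeasureTheory.Measure ℝ) : Prop :=
  ∀ ε : ℝ, 0 < ε → ∃ N : ℕ, ∀ i ≥ N, ∀ A : Set ℝ, MeasurableSet A →
    |((p i) A).toReal - (μ A).toReal| < ε

/-- Weak convergence of measures (tested against bounded continuous functions). -/
def TendstoWeak (p : ℕ → MeasureTheory.Measure ℝ) (μ : MeasureTheory.Measure ℝ) : Prop :=
  ∀ f : BoundedContinuousFunction ℝ ℝ,
    Filter.Tendsto (fun i => ∫ x, f x ∂(p i)) Filter.atTop (nhds (∫ x, f x ∂μ))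

/-- Assumption 1: if `v` restricted to `[0,M)` is a component of `u` restricted to `[0,M)`,
then `s(·,u) ≥ s(·,v)` on `[0,M]`. -/
def Assumption1 (M : ℝ) (w : ℝ → MeasureTheory.Measure ℝ → ℝ) : Prop :=
  ∀ u v : MeasureTheory.Measure ℝ,
    IsProbabilityMeasure u → IsProbabilityMeasure v →
    u ((Set.Icc 0 M)ᶜ) = 0 → v ((Set.Icc 0 M)ᶜ) = 0 →
    v.restrict (Set.Ico 0 M) ≤ u.restrict (Set.Ico 0 M) →
    ∀ x ∈ Set.Icc (0:ℝ) M, sel w v x ≤ sel w u x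

/-- Assumption 2: for every `0 ≤ a < M` and `0 < ε < 1` there is `c(a,ε) > 1` such that
`s(M,u) ≥ c(a,ε) s(M,v)` whenever `v_{[0,M)} ≺ u_{[0,M)}` and `D_u(a) ≥ D_v(a) + ε`. -/
def Assumption2 (M : ℝ) (w : ℝ → MeasureTheory.Measure ℝ → ℝ) : Prop :=
  ∀ a : ℝ, 0 ≤ a → a < M → ∀ ε : ℝ, 0 < ε → ε < 1 → ∃ c : ℝ, 1 < c ∧
    ∀ u v : MeasureTheory.Measure ℝ,
      IsProbabilityMeasure u → IsProbabilityMeasure v →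
      u ((Set.Icc 0 M)ᶜ) = 0 → v ((Set.Icc 0 M)ᶜ) = 0 →
      v.restrict (Set.Ico 0 M) ≤ u.restrict (Set.Ico 0 M) →
      (v (Set.Icc 0 a)).toReal + ε ≤ (u (Set.Icc 0 a)).toReal →
      c * sel w v M ≤ sel w u M

/-! Starting from `δ_M`, the restrictions `(p_i)_{[0,M)}` increase: `(p_0)_{[0,M)} = 0`, and
Assumption 1 makes the selection step monotone for `≺` on `[0,M)`, the mutation term being the
same on both sides. Their increasing limit `μ` has mass at most one. Since `p_i` lives on
`[0,M) ∪ {M}`, we have `p_i = (p_i)_{[0,M)} + (1 - p_i[0,M)) δ_M`, and `p* := μ + (1 - μ[0,M)) δ_M`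
differs from `p_i` on any set by at most `μ[0,M) - p_i[0,M) → 0`. -/

open scoped ENNReal Topology

theorem ENNReal.tsum_iSup_of_monotone {α ι : Type*} [Preorder ι] [IsDirectedOrder ι]
    {f : α → ι → ℝ≥0∞} (hf : ∀ a, Monotone (f a)) : ∑' a, ⨆ i, f a i = ⨆ i, ∑' a, f a i := by
  simp_rw [ENNReal.tsum_eq_iSup_sum]
  rw [iSup_comm]
  exact iSup_congr fun s => ENNReal.finsetSum_iSup_of_monotone hf

theorem MeasureTheory.Measure.exists_apply_eq_iSup_of_monotone {α ι : Type*}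
    [MeasurableSpace α] [Preorder ι] [IsDirectedOrder ι] {ν : ι → Measure α} (hν : Monotone ν) :
    ∃ μ : Measure α, ∀ s, MeasurableSet s → μ s = ⨆ i, ν i s := by
  refine ⟨Measure.ofMeasurable (fun s _ => ⨆ i, ν i s) (by simp) fun g hg hd => ?_,
    fun s hs => Measure.ofMeasurable_apply s hs⟩
  simp_rw [measure_iUnion hd hg]
  exact (ENNReal.tsum_iSup_of_monotone fun n _ _ hij => hν hij (g n)).symm

section TotalVariation

variable {μ : Measure ℝ} {x : ℝ}

theorem abs_measureReal_add_dirac_sub_le {ν : Measure ℝ} [IsFiniteMeasure μ] (hνμ : ν ≤ μ)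
    (hμ : μ univ ≤ 1) {A : Set ℝ} (hA : MeasurableSet A) :
    |(ν + (1 - ν univ) • Measure.dirac x).real A - (μ + (1 - μ univ) • Measure.dirac x).real A|
      ≤ μ.real univ - ν.real univ := by
  have : IsFiniteMeasure ν := isFiniteMeasure_of_le μ hνμ
  have hν : ν univ ≤ 1 := (hνμ univ).trans hμ
  have real_le {s : Set ℝ} : ν.real s ≤ μ.real s :=
    ENNReal.toReal_mono (measure_ne_top μ s) (hνμ s)
  have hA_le : ν.real A ≤ μ.real A := real_le
  have hAc_le : ν.real Aᶜ ≤ μ.real Aᶜ := real_le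
  have hδ₀ : 0 ≤ (Measure.dirac x).real A := measureReal_nonneg
  have hδ₁ : (Measure.dirac x).real A ≤ 1 := measureReal_le_one
  have hδ_fin (a : ℝ≥0∞) : ((1 - a) • Measure.dirac x) A ≠ ∞ :=
    ENNReal.mul_ne_top (ENNReal.sub_ne_top ENNReal.one_ne_top) (measure_ne_top _ _)
  -- the difference is `(ν A - μ A) + (μ univ - ν univ) δ_x(A)`,
  -- where `0 ≤ μ A - ν A ≤ μ univ - ν univ`
  rw [measureReal_add_apply (h₂ := hδ_fin _), measureReal_add_apply (h₂ := hδ_fin _),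
    measureReal_ennreal_smul_apply, measureReal_ennreal_smul_apply,
    ENNReal.toReal_sub_of_le hν ENNReal.one_ne_top,
    ENNReal.toReal_sub_of_le hμ ENNReal.one_ne_top, ENNReal.toReal_one,
    ← measureReal_def, ← measureReal_def,
    ← measureReal_add_measureReal_compl (μ := ν) hA,
    ← measureReal_add_measureReal_compl (μ := μ) hA, abs_le]
  constructor <;> nlinarith

theorem tendstoTV_add_dirac {ν : ℕ → Measure ℝ} [IsFiniteMeasure μ] (hνμ : ∀ i, ν i ≤ μ)
    (hμ : μ univ ≤ 1) (hlim : Tendsto (fun i => ν i univ) atTop (𝓝 (μ univ))) :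
    TendstoTV (fun i => ν i + (1 - ν i univ) • Measure.dirac x)
      (μ + (1 - μ univ) • Measure.dirac x) := by
  have hgap : Tendsto (fun i => μ.real univ - (ν i).real univ) atTop (𝓝 0) := by
    simpa [measureReal_def] using
      ((ENNReal.tendsto_toReal (measure_ne_top μ univ)).comp hlim).const_sub (μ.real univ)
  intro ε hε
  obtain ⟨N, hN⟩ := eventually_atTop.1 (hgap.eventually (gt_mem_nhds hε))
  exact ⟨N, fun i hi A hA =>
    (abs_measureReal_add_dirac_sub_le (hνμ i) hμ hA).trans_lt (hN i hi)⟩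

end TotalVariation

section SelectionStep

variable {M β : ℝ} {w : ℝ → Measure ℝ → ℝ} {q u v : Measure ℝ}

noncomputable def selStep (w : ℝ → Measure ℝ → ℝ) (β : ℝ) (q u : Measure ℝ) : Measure ℝ :=
  ENNReal.ofReal (1 - β) • u.withDensity (fun x => ENNReal.ofReal (sel w u x))
    + ENNReal.ofReal β • q

theorem evol_succ (p₀ : Measure ℝ) (i : ℕ) :
    evol w β q p₀ (i + 1) = selStep w β q (evol w β q p₀ i) := rfl

theorem withDensity_sel_univ [IsProbabilityMeasure u] (hw : ∀ x, 0 ≤ w x u) :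
    u.withDensity (fun x => ENNReal.ofReal (sel w u x)) univ = 1 := by
  rw [withDensity_apply _ MeasurableSet.univ, Measure.restrict_univ]
  by_cases hmean : 0 < ∫ y, w y u ∂u
  · have hint : Integrable (fun y => w y u) u := by
      by_contra hni
      exact hmean.ne' (integral_undef hni)
    simp only [sel, if_pos hmean]
    rw [← ofReal_integral_eq_lintegral_ofReal (hint.div_const _)
      (Eventually.of_forall fun y => div_nonneg (hw y) hmean.le), integral_div,
      div_self hmean.ne', ENNReal.ofReal_one]
  · simp [sel, if_neg hmean]

theorem isProbabilityMeasure_selStep (hβ : β ∈ Icc 0 1) [IsProbabilityMeasure q]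
    [IsProbabilityMeasure u] (hw : ∀ x, 0 ≤ w x u) : IsProbabilityMeasure (selStep w β q u) := by
  constructor
  rw [selStep, Measure.add_apply, Measure.smul_apply, Measure.smul_apply,
    withDensity_sel_univ hw, measure_univ, smul_eq_mul, smul_eq_mul, mul_one, mul_one,
    ← ENNReal.ofReal_add (by linarith [hβ.2]) hβ.1]
  norm_num

theorem selStep_apply_eq_zero {s : Set ℝ} (hu : u s = 0) (hq : q s = 0) :
    selStep w β q u s = 0 := by
  simp [selStep, withDensity_absolutelyContinuous u _ hu, hq]

theorem selStep_restrict_Ico_mono (hA1 : Assumption1 M w) [IsProbabilityMeasure u]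
    [IsProbabilityMeasure v] (hu : u (Icc 0 M)ᶜ = 0) (hv : v (Icc 0 M)ᶜ = 0)
    (hvu : v.restrict (Ico 0 M) ≤ u.restrict (Ico 0 M)) :
    (selStep w β q v).restrict (Ico 0 M) ≤ (selStep w β q u).restrict (Ico 0 M) := by
  have hsel : ∀ᵐ x ∂v.restrict (Ico 0 M),
      ENNReal.ofReal (sel w v x) ≤ ENNReal.ofReal (sel w u x) :=
    (ae_restrict_iff' measurableSet_Ico).2 <| Eventually.of_forall fun x hx =>
      ENNReal.ofReal_le_ofReal (hA1 u v ‹_› ‹_› hu hv hvu x (Ico_subset_Icc_self hx))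
  have hdensity : (v.restrict (Ico 0 M)).withDensity (fun x => ENNReal.ofReal (sel w u x)) ≤
      (u.restrict (Ico 0 M)).withDensity (fun x => ENNReal.ofReal (sel w u x)) :=
    Measure.le_iff.2 fun s hs => by
      rw [withDensity_apply _ hs, withDensity_apply _ hs]
      exact lintegral_mono' (Measure.restrict_mono subset_rfl hvu) le_rfl
  simp only [selStep, Measure.restrict_add, Measure.restrict_smul,
    restrict_withDensity measurableSet_Ico]
  gcongr
  exact (withDensity_mono hsel).trans hdensity

end SelectionStep

section Iterates

variable {M β : ℝ} {w : ℝ → Measure ℝ → ℝ} {q p₀ : Measure ℝ}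

theorem isProbabilityMeasure_evol (hβ : β ∈ Icc 0 1) [IsProbabilityMeasure q]
    [IsProbabilityMeasure p₀] (hw : ∀ x u, 0 ≤ w x u) (i : ℕ) :
    IsProbabilityMeasure (evol w β q p₀ i) := by
  induction i with
  | zero => assumption
  | succ i ih =>
    rw [evol_succ]
    exact isProbabilityMeasure_selStep hβ (hw · _)

theorem evol_apply_eq_zero {s : Set ℝ} (hp₀ : p₀ s = 0) (hq : q s = 0) (i : ℕ) :
    evol w β q p₀ i s = 0 := by
  induction i with
  | zero => exact hp₀
  | succ i ih =>
    rw [evol_succ]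
    exact selStep_apply_eq_zero ih hq

theorem monotone_evol_dirac_restrict_Ico (hA1 : Assumption1 M w) (hM : 0 ≤ M)
    (hβ : β ∈ Icc 0 1) [IsProbabilityMeasure q] (hq : q (Icc 0 M)ᶜ = 0)
    (hw : ∀ x u, 0 ≤ w x u) :
    Monotone fun i => (evol w β q (Measure.dirac M) i).restrict (Ico 0 M) := by
  have hsupp : ∀ i, evol w β q (Measure.dirac M) i (Icc 0 M)ᶜ = 0 :=
    evol_apply_eq_zero (by simp [Measure.dirac_apply', hM]) hq
  refine monotone_nat_of_le_succ fun i => ?_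
  induction i with
  | zero =>
    have hδ : (Measure.dirac M).restrict (Ico 0 M) = 0 := by simp
    exact hδ.trans_le (Measure.zero_le _)
  | succ i ih =>
    have (j : ℕ) : IsProbabilityMeasure (evol w β q (Measure.dirac M) j) :=
      isProbabilityMeasure_evol hβ hw j
    rw [evol_succ, evol_succ]
    exact selStep_restrict_Ico_mono hA1 (hsupp (i + 1)) (hsupp i) ih

end Iterates

theorem restrict_Ico_add_dirac_eq {M : ℝ} {p : Measure ℝ} [IsProbabilityMeasure p] (hM : 0 ≤ M)
    (hp : p (Icc 0 M)ᶜ = 0) :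
    p.restrict (Ico 0 M) + (1 - p.restrict (Ico 0 M) univ) • Measure.dirac M = p := by
  have hsplit : p.restrict (Ico 0 M) + p.restrict {M} = p := by
    rw [← Measure.restrict_union (by simp) (measurableSet_singleton M), Ico_union_right hM,
      Measure.restrict_eq_self_of_ae_mem (s := Icc 0 M) (mem_ae_iff.2 hp)]
  have hmass : p {M} = 1 - p (Ico 0 M) := by
    refine ENNReal.eq_sub_of_add_eq (measure_ne_top _ _) ?_
    simpa [add_comm] using congrArg (· univ) hsplit
  rw [Measure.restrict_apply_univ, ← hmass, ← Measure.restrict_singleton, hsplit]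

theorem stmt0_general (M : ℝ) (hM : 0 < M) (β : ℝ) (hβ : β ∈ Set.Ioo (0:ℝ) 1)
    (q : MeasureTheory.Measure ℝ) [IsProbabilityMeasure q] (hq : q ((Set.Icc 0 M)ᶜ) = 0)
    (w : ℝ → MeasureTheory.Measure ℝ → ℝ)
    (hw_nonneg : ∀ x u, 0 ≤ w x u)
    (hA1 : Assumption1 M w) :
    ∃ pstar : MeasureTheory.Measure ℝ, IsProbabilityMeasure pstar ∧
      pstar ((Set.Icc 0 M)ᶜ) = 0 ∧
      TendstoTV (evol w β q (MeasureTheory.Measure.dirac M)) pstar ∧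
      ∀ i : ℕ,
        (evol w β q (MeasureTheory.Measure.dirac M) i).restrict (Set.Ico 0 M) ≤
          (evol w β q (MeasureTheory.Measure.dirac M) (i + 1)).restrict (Set.Ico 0 M) ∧
        (evol w β q (MeasureTheory.Measure.dirac M) (i + 1)).restrict (Set.Ico 0 M) ≤
          pstar.restrict (Set.Ico 0 M) := by
  have hβ' : β ∈ Icc 0 1 := Ioo_subset_Icc_self hβ
  set p := evol w β q (Measure.dirac M)
  set ν := fun i => (p i).restrict (Ico 0 M)
  have hp_prob (i : ℕ) : IsProbabilityMeasure (p i) := isProbabilityMeasure_evol hβ' hw_nonneg i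
  have hp_supp (i : ℕ) : p i (Icc 0 M)ᶜ = 0 :=
    evol_apply_eq_zero (by simp [Measure.dirac_apply', hM.le]) hq i
  have hν : Monotone ν := monotone_evol_dirac_restrict_Ico hA1 hM.le hβ' hq hw_nonneg
  obtain ⟨μ, hμ⟩ := Measure.exists_apply_eq_iSup_of_monotone hν
  have hνμ (i : ℕ) : ν i ≤ μ :=
    Measure.le_iff.2 fun s hs => (hμ s hs).symm ▸ le_iSup (ν · s) i
  have hμ_le_one : μ univ ≤ 1 := (hμ univ .univ).trans_le (iSup_le fun i =>
    (Measure.restrict_apply_le _ _).trans prob_le_one)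
  have : IsFiniteMeasure μ := ⟨hμ_le_one.trans_lt ENNReal.one_lt_top⟩
  have hμ_null : μ (Ico 0 M)ᶜ = 0 := by
    simp [hμ _ measurableSet_Ico.compl, ν, Measure.restrict_apply measurableSet_Ico.compl]
  have hμ_Ico : μ.restrict (Ico 0 M) = μ :=
    Measure.restrict_eq_self_of_ae_mem (s := Ico 0 M) (mem_ae_iff.2 hμ_null)
  refine ⟨μ + (1 - μ univ) • Measure.dirac M, ⟨by simp [add_tsub_cancel_of_le hμ_le_one]⟩,
    ?_, ?_, fun i => ⟨hν i.le_succ, ?_⟩⟩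
  · simp [measure_mono_null (compl_subset_compl.2 Ico_subset_Icc_self) hμ_null,
      Measure.dirac_apply', hM.le]
  · have hlim : Tendsto (fun i => ν i univ) atTop (𝓝 (μ univ)) :=
      hμ univ .univ ▸ tendsto_atTop_iSup fun i j hij => hν hij univ
    simpa only [ν, restrict_Ico_add_dirac_eq hM.le (hp_supp _)] using
      tendstoTV_add_dirac hνμ hμ_le_one hlim (x := M)
  · calc ν (i + 1) ≤ μ.restrict (Ico 0 M) := hμ_Ico.symm ▸ hνμ (i + 1)
      _ ≤ _ := Measure.restrict_mono subset_rfl (Measure.le_add_right le_rfl)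

/-- Theorem 3 of the paper. Under Assumption 1, starting from `p₀ = δ_M`
the sequence `(p_i)` converges in total variation to a probability measure `p*` on `[0,M]`,
and `(p_i)_{[0,M)} ≺ (p_{i+1})_{[0,M)} ≺ (p*)_{[0,M)}` for every `i`. -/
theorem stmt0 (M : ℝ) (hM : 0 < M) (β : ℝ) (hβ : β ∈ Set.Ioo (0:ℝ) 1)
    (q : MeasureTheory.Measure ℝ) [IsProbabilityMeasure q] (hq : q ((Set.Icc 0 M)ᶜ) = 0)
    (w : ℝ → MeasureTheory.Measure ℝ → ℝ)
    (hw_nonneg : ∀ x u, 0 ≤ w x u)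
    (hw_meas : ∀ u, Measurable fun x => w x u)
    (hA1 : Assumption1 M w) :
    ∃ pstar : MeasureTheory.Measure ℝ, IsProbabilityMeasure pstar ∧
      pstar ((Set.Icc 0 M)ᶜ) = 0 ∧
      TendstoTV (evol w β q (MeasureTheory.Measure.dirac M)) pstar ∧
      ∀ i : ℕ,
        (evol w β q (MeasureTheory.Measure.dirac M) i).restrict (Set.Ico 0 M) ≤
          (evol w β q (MeasureTheory.Measure.dirac M) (i + 1)).restrict (Set.Ico 0 M) ∧
        (evol w β q (MeasureTheory.Measure.dirac M) (i + 1)).restrict (Set.Ico 0 M) ≤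
          pstar.restrict (Set.Ico 0 M) :=
  stmt0_general M hM β hβ q hq w hw_nonneg hA1
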